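/- Let W : ℝ² → [0,∞) be C² with exactly one zero at 0 in a convex neighborhood on which W is convex, and with D²W(0) positive definite. There exist η, R₀, C, c > 0 such that for all R > R₀ and all u ∈ H¹([0,R],ℝ²) with u(0) = a and d(0,a) ≤ η, one has E(u,[0,R]) := ∫₀^R (½|u'|² + W(u)) dt ≥ d(0,a) − C e^{−cR}, where d is the degenerate distance associated to W. -/

import Mathlib

/-!
Near the nondegenerate well, `m ‖q‖² ≤ W q ≤ M ‖q‖²` on a ball of radius `r`. By AM-GM the
energy dominates the weighted length `∫ √(2W(u)) ‖u'‖`, and along a curve inside the ball the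
derivative of `√(m/2) ‖u‖²` is dominated by the weighted length density. Hence `d(0,a) ≤ η`
puts `a` in the ball of radius `r/2`, and a curve leaving the ball of radius `r` pays more
than `η`. A curve that stays in the ball satisfies, by the triangle inequality through `u τ`
and the upper bound on `W`, `d(0,a) - L(τ) ≤ √(M/2) ‖u τ‖² ≤ W(u τ) / β` with `L(τ)` the
weighted length of `u` on `[0,τ]`; splitting the energy at `τ` gives a linear differential
inequality whose Grönwall bound is `E(u,[0,R]) ≥ d(0,a) (1 - e^{-βR})`, with `β = m / √(M/2)`.
-/

open Real MeasureTheory Filter Topology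

/-- The degenerate geodesic distance associated to a nonnegative potential `W` on ℝ² ≅ ℂ. -/
noncomputable def degDist (W : ℂ → ℝ) (p q : ℂ) : ℝ :=
  sInf {c | ∃ γ : ℝ → ℂ, ContDiff ℝ 1 γ ∧ γ 0 = p ∧ γ 1 = q ∧
    c = ∫ t in (0:ℝ)..1, Real.sqrt 2 * Real.sqrt (W (γ t)) * ‖deriv γ t‖}

noncomputable def oneDEnergy (W : ℂ → ℝ) (u : ℝ → ℂ) (a b : ℝ) : ℝ :=
  ∫ t in a..b, ((1 / 2) * ‖deriv u t‖ ^ 2 + W (u t))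

open Set

lemma sqrt_two_mul_sqrt_mul_le {w : ℝ} (hw : 0 ≤ w) (x : ℝ) : √2 * √w * x ≤ 1 / 2 * x ^ 2 + w := by
  have h := two_mul_le_add_sq x √(2 * w)
  rw [sq_sqrt (by positivity)] at h
  rw [← sqrt_mul zero_le_two]
  linarith

lemma sqrt_two_mul_sqrt_mul_sq {c x : ℝ} (hx : 0 ≤ x) : √2 * √(c * x ^ 2) = 2 * √(c / 2) * x := by
  rw [← sqrt_mul zero_le_two, show 2 * (c * x ^ 2) = (2 * x) ^ 2 * (c / 2) by ring,
    sqrt_mul (sq_nonneg _), sqrt_sq (by positivity)]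
  ring

lemma exists_first_hit {f : ℝ → ℝ} (hf : Continuous f) {a b c : ℝ} (hab : a ≤ b) (ha : f a ≤ c)
    (hb : c ≤ f b) : ∃ t ∈ Icc a b, f t = c ∧ ∀ s ∈ Icc a t, f s ≤ c := by
  set S := Icc a b ∩ f ⁻¹' Ici c
  have hbdd : BddBelow S := ⟨a, fun s hs => hs.1.1⟩
  have ht : sInf S ∈ S :=
    (isClosed_Icc.inter (isClosed_Ici.preimage hf)).csInf_mem ⟨b, ⟨hab, le_rfl⟩, hb⟩ hbdd
  have hmin : ∀ s ∈ Icc a (sInf S), c ≤ f s → s = sInf S := fun s hs hfs =>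
    le_antisymm hs.2 (csInf_le hbdd ⟨⟨hs.1, hs.2.trans ht.1.2⟩, hfs⟩)
  obtain ⟨t', ht', hft'⟩ := intermediate_value_Icc ht.1.1 hf.continuousOn ⟨ha, ht.2⟩
  have hft : f (sInf S) = c := hmin t' ht' hft'.ge ▸ hft'
  refine ⟨sInf S, ht.1, hft, fun s hs => le_of_not_gt fun hlt => ?_⟩
  rw [hmin s hs hlt.le, hft] at hlt
  exact lt_irrefl c hlt

section Taylor

variable {E : Type*} [NormedAddCommGroup E] [NormedSpace ℝ E]

lemma abs_apply_vec_two_le (Q : ContinuousMultilinearMap ℝ (fun _ : Fin 2 => E) ℝ) (v : E) :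
    |Q ![v, v]| ≤ ‖Q‖ * ‖v‖ ^ 2 := by
  simpa [Fin.prod_univ_two, sq] using Q.le_opNorm ![v, v]

lemma apply_vec_two_smul (Q : ContinuousMultilinearMap ℝ (fun _ : Fin 2 => E) ℝ) (c : ℝ) (v : E) :
    Q ![c • v, c • v] = c ^ 2 * Q ![v, v] := by
  have h : (![c • v, c • v] : Fin 2 → E) = fun i => c • ![v, v] i := by
    ext i; fin_cases i <;> rfl
  rw [h, Q.map_smul_univ, smul_eq_mul, Fin.prod_univ_two, sq]

lemma exists_pos_mul_sq_le_of_pos [FiniteDimensional ℝ E]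
    (Q : ContinuousMultilinearMap ℝ (fun _ : Fin 2 => E) ℝ) (hQ : ∀ v, v ≠ 0 → 0 < Q ![v, v]) :
    ∃ μ > 0, ∀ v, μ * ‖v‖ ^ 2 ≤ Q ![v, v] := by
  have hQ0 : Q ![0, 0] = 0 := by simpa using apply_vec_two_smul Q 0 0
  rcases subsingleton_or_nontrivial E with hE | hE
  · exact ⟨1, one_pos, fun v => by simp [Subsingleton.elim v 0, hQ0]⟩
  have hcont : Continuous fun v : E => Q ![v, v] :=
    Q.cont.comp (continuous_pi fun i => by fin_cases i <;> exact continuous_id)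
  obtain ⟨v₀, hv₀, hmin⟩ := (isCompact_sphere (0 : E) 1).exists_isMinOn
    (NormedSpace.sphere_nonempty.mpr zero_le_one) hcont.continuousOn
  refine ⟨Q ![v₀, v₀], hQ v₀ (ne_zero_of_mem_unit_sphere ⟨v₀, hv₀⟩), fun v => ?_⟩
  rcases eq_or_ne v 0 with rfl | hv
  · simp [hQ0]
  have hw : ‖v‖⁻¹ • v ∈ Metric.sphere (0 : E) 1 := by
    simp [norm_smul, inv_mul_cancel₀ (norm_ne_zero_iff.mpr hv)]
  have h := apply_vec_two_smul Q ‖v‖ (‖v‖⁻¹ • v)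
  rw [smul_inv_smul₀ (norm_ne_zero_iff.mpr hv)] at h
  rw [h, mul_comm]
  exact mul_le_mul_of_nonneg_left (hmin hw) (sq_nonneg _)

lemma eq_add_fderiv_add_integral_iteratedFDeriv_two {W : E → ℝ} (hW : ContDiff ℝ 2 W)
    (x q : E) : W (x + q) = W x + fderiv ℝ W x q +
      ∫ s in (0 : ℝ)..1, (1 - s) * iteratedFDeriv ℝ 2 W (x + s • q) ![q, q] := by
  have hp : ∀ s : ℝ, HasDerivAt (fun s : ℝ => x + s • q) q s := fun s => by
    simpa using ((hasDerivAt_id s).smul_const q).const_add x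
  have hW' : ∀ s : ℝ, HasDerivAt (fun s : ℝ => W (x + s • q)) (fderiv ℝ W (x + s • q) q) s :=
    fun s => ((hW.differentiable two_ne_zero _).hasFDerivAt).comp_hasDerivAt s (hp s)
  have hG : ∀ s : ℝ, HasDerivAt (fun s : ℝ => fderiv ℝ W (x + s • q) q)
      (iteratedFDeriv ℝ 2 W (x + s • q) ![q, q]) s := fun s => by
    have hD := ((hW.fderiv_right (by norm_num)).differentiable one_ne_zero _).hasFDerivAt
      |>.comp_hasDerivAt s (hp s)
    rw [iteratedFDeriv_two_apply]
    exact (ContinuousLinearMap.apply ℝ ℝ q).hasFDerivAt.comp_hasDerivAt s hD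
  have hF : ∀ s : ℝ, HasDerivAt (fun s : ℝ => W (x + s • q) + (1 - s) * fderiv ℝ W (x + s • q) q)
      ((1 - s) * iteratedFDeriv ℝ 2 W (x + s • q) ![q, q]) s := fun s => by
    refine ((hW' s).add (((hasDerivAt_id' s).const_sub 1).mul (hG s))).congr_deriv ?_
    ring
  have hcont : Continuous fun s : ℝ => (1 - s) * iteratedFDeriv ℝ 2 W (x + s • q) ![q, q] :=
    (continuous_const.sub continuous_id).mul <| continuous_eval_const _ |>.comp <|
      (hW.continuous_iteratedFDeriv le_rfl).comp (by fun_prop)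
  rw [intervalIntegral.integral_eq_sub_of_hasDerivAt (fun s _ => hF s)
    (hcont.intervalIntegrable 0 1)]
  simp

lemma integral_one_sub_mul_mem_Icc {φ : ℝ → ℝ} (hφ : Continuous φ) {L U : ℝ}
    (h : ∀ s ∈ Icc (0 : ℝ) 1, φ s ∈ Icc L U) :
    ∫ s in (0 : ℝ)..1, (1 - s) * φ s ∈ Icc (L / 2) (U / 2) := by
  have hconst : ∀ c : ℝ, ∫ s in (0 : ℝ)..1, (1 - s) * c = c / 2 := fun c => by
    rw [intervalIntegral.integral_mul_const, intervalIntegral.integral_comp_sub_left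
      (fun x => x)]
    norm_num
    ring
  have hint : ∀ c : ℝ, IntervalIntegrable (fun s : ℝ => (1 - s) * c) volume 0 1 := fun c =>
    (by fun_prop : Continuous fun s : ℝ => (1 - s) * c).intervalIntegrable 0 1
  have hφint : IntervalIntegrable (fun s => (1 - s) * φ s) volume 0 1 :=
    (by fun_prop : Continuous fun s : ℝ => (1 - s) * φ s).intervalIntegrable 0 1
  refine ⟨hconst L ▸ intervalIntegral.integral_mono_on zero_le_one (hint L) hφint fun s hs => ?_,
    hconst U ▸ intervalIntegral.integral_mono_on zero_le_one hφint (hint U) fun s hs => ?_⟩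
  · exact mul_le_mul_of_nonneg_left (h s hs).1 (by linarith [hs.2])
  · exact mul_le_mul_of_nonneg_left (h s hs).2 (by linarith [hs.2])

lemma exists_quadratic_bounds [FiniteDimensional ℝ E] {W : E → ℝ} (hW : ContDiff ℝ 2 W)
    (hW0 : W 0 = 0) (hcrit : fderiv ℝ W 0 = 0)
    (hHess : ∀ v : E, v ≠ 0 → 0 < iteratedFDeriv ℝ 2 W 0 ![v, v]) :
    ∃ r > (0 : ℝ), ∃ m > (0 : ℝ), ∃ M > (0 : ℝ),
      ∀ q : E, ‖q‖ ≤ r → m * ‖q‖ ^ 2 ≤ W q ∧ W q ≤ M * ‖q‖ ^ 2 := by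
  set H := iteratedFDeriv ℝ 2 W
  obtain ⟨μ, hμ, hH0⟩ := exists_pos_mul_sq_le_of_pos (H 0) hHess
  obtain ⟨ε, hε, hball⟩ := Metric.mem_nhds_iff.mp <|
    (hW.continuous_iteratedFDeriv le_rfl).continuousAt (x := 0) |>.preimage_mem_nhds <|
      Metric.closedBall_mem_nhds (H 0) (half_pos hμ)
  have hHess_near : ∀ x : E, ‖x‖ ≤ ε / 2 → ∀ v : E,
      H x ![v, v] ∈ Icc (μ / 2 * ‖v‖ ^ 2) ((‖H 0‖ + μ / 2) * ‖v‖ ^ 2) := fun x hx v => by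
    have hclose : ‖H x - H 0‖ ≤ μ / 2 := by
      simpa [dist_eq_norm] using hball (by simp; linarith : x ∈ Metric.ball 0 ε)
    have h₁ := abs_le.mp ((abs_apply_vec_two_le (H x - H 0) v).trans
      (mul_le_mul_of_nonneg_right hclose (sq_nonneg _)))
    have h₂ := (abs_le.mp (abs_apply_vec_two_le (H 0) v)).2
    have h₃ := hH0 v
    simp only [sub_apply] at h₁
    constructor <;> nlinarith
  refine ⟨ε / 2, half_pos hε, μ / 4, by positivity, (‖H 0‖ + μ / 2) / 2, by positivity,
    fun q hq => ?_⟩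
  have hTaylor := eq_add_fderiv_add_integral_iteratedFDeriv_two hW 0 q
  simp only [zero_add, hW0, hcrit, zero_apply] at hTaylor
  have hmem := integral_one_sub_mul_mem_Icc (φ := fun s => H (s • q) ![q, q])
    ((continuous_eval_const _).comp ((hW.continuous_iteratedFDeriv le_rfl).comp (by fun_prop)))
    fun s hs => hHess_near _ (by
      rw [norm_smul, norm_of_nonneg hs.1]; nlinarith [norm_nonneg q, hs.2]) q
  rw [← hTaylor] at hmem
  constructor <;> linarith [hmem.1, hmem.2]

end Taylor

section WeightedLength

variable {E : Type*} [NormedAddCommGroup E] [NormedSpace ℝ E]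

/-- `degDist W p q` is the infimum of `weightedLength W γ 0 1` over `C¹` paths from `p` to `q`. -/
noncomputable def weightedLength (W : E → ℝ) (γ : ℝ → E) (a b : ℝ) : ℝ :=
  ∫ t in a..b, √2 * √(W (γ t)) * ‖deriv γ t‖

variable {W : E → ℝ} {γ : ℝ → E}

lemma continuous_weightedLength_integrand (hW : Continuous W) (hγ : ContDiff ℝ 1 γ) :
    Continuous fun t => √2 * √(W (γ t)) * ‖deriv γ t‖ :=
  (continuous_const.mul (hW.comp hγ.continuous).sqrt).mul (hγ.continuous_deriv le_rfl).norm

lemma weightedLength_mono_right (hW : Continuous W) (hγ : ContDiff ℝ 1 γ) {a b c : ℝ}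
    (hbc : b ≤ c) : weightedLength W γ a b ≤ weightedLength W γ a c := by
  have hint := (continuous_weightedLength_integrand hW hγ).intervalIntegrable (μ := volume)
  rw [weightedLength, weightedLength, ← intervalIntegral.integral_add_adjacent_intervals
    (hint a b) (hint b c), le_add_iff_nonneg_right]
  exact intervalIntegral.integral_nonneg (μ := volume) hbc fun t _ => by positivity

lemma weightedLength_congr {η : ℝ → E} {a b : ℝ} (hab : a ≤ b) (h : EqOn γ η (Ioo a b)) :
    weightedLength W γ a b = weightedLength W η a b := by
  simp only [weightedLength, intervalIntegral.integral_of_le hab, integral_Ioc_eq_integral_Ioo]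
  refine setIntegral_congr_fun measurableSet_Ioo fun t ht => ?_
  simp only [h ht, h.deriv isOpen_Ioo ht]

lemma weightedLength_comp_of_monotone {φ : ℝ → ℝ} (hγ : Differentiable ℝ γ)
    (hφ : Differentiable ℝ φ) (hmono : Monotone φ) (a b : ℝ) :
    weightedLength W (γ ∘ φ) a b = weightedLength W γ (φ a) (φ b) := by
  rw [weightedLength, weightedLength, ← intervalIntegral.integral_comp_mul_deriv_of_deriv_nonneg
    hφ.continuous.continuousOn (fun t _ => (hφ t).hasDerivAt) fun t _ => hmono.deriv_nonneg]
  refine intervalIntegral.integral_congr fun t _ => ?_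
  rw [Function.comp_apply, deriv.scomp t (hγ _) (hφ t), norm_smul, Real.norm_eq_abs,
    abs_of_nonneg hmono.deriv_nonneg]
  simp only [Function.comp_apply]
  ring

lemma weightedLength_comp_of_antitone {φ : ℝ → ℝ} (hγ : Differentiable ℝ γ)
    (hφ : Differentiable ℝ φ) (hanti : Antitone φ) (a b : ℝ) :
    weightedLength W (γ ∘ φ) a b = weightedLength W γ (φ b) (φ a) := by
  rw [weightedLength, weightedLength, intervalIntegral.integral_symm,
    ← intervalIntegral.integral_comp_mul_deriv_of_deriv_nonpos hφ.continuous.continuousOn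
      (fun t _ => (hφ t).hasDerivAt) fun t _ => hanti.deriv_nonpos,
    ← intervalIntegral.integral_neg]
  refine intervalIntegral.integral_congr fun t _ => ?_
  rw [Function.comp_apply, deriv.scomp t (hγ _) (hφ t), norm_smul, Real.norm_eq_abs,
    abs_of_nonpos hanti.deriv_nonpos]
  simp only [Function.comp_apply]
  ring

/-- Each half of `σ` is frozen while the other one moves, and `smoothTransition` is flat at
both ends, so `σ` is `C¹` with no matching condition at `s = 1/2`. -/
lemma exists_contDiff_weightedLength_eq_add (hW : Continuous W) {γ₁ γ₂ : ℝ → E}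
    (hγ₁ : ContDiff ℝ 1 γ₁) (hγ₂ : ContDiff ℝ 1 γ₂) (h : γ₁ 1 = γ₂ 0) :
    ∃ σ : ℝ → E, ContDiff ℝ 1 σ ∧ σ 0 = γ₁ 0 ∧ σ 1 = γ₂ 1 ∧
      weightedLength W σ 0 1 = weightedLength W γ₁ 0 1 + weightedLength W γ₂ 0 1 := by
  set ψ₁ : ℝ → ℝ := fun s => smoothTransition (2 * s)
  set ψ₂ : ℝ → ℝ := fun s => smoothTransition (2 * s - 1)
  have hψ₁ : ContDiff ℝ 1 ψ₁ := smoothTransition.contDiff.comp (contDiff_const.mul contDiff_id)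
  have hψ₂ : ContDiff ℝ 1 ψ₂ :=
    smoothTransition.contDiff.comp ((contDiff_const.mul contDiff_id).sub contDiff_const)
  have hψ₁_mono : Monotone ψ₁ := smoothTransition.monotone.comp fun x y hxy => by linarith
  have hψ₂_mono : Monotone ψ₂ := smoothTransition.monotone.comp fun x y hxy => by linarith
  set σ : ℝ → E := fun s => γ₁ (ψ₁ s) + (γ₂ (ψ₂ s) - γ₂ 0)
  have hσ : ContDiff ℝ 1 σ := (hγ₁.comp hψ₁).add ((hγ₂.comp hψ₂).sub contDiff_const)
  have hleft : EqOn σ (γ₁ ∘ ψ₁) (Ioo 0 (1 / 2)) := fun s hs => by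
    simp [σ, ψ₂, smoothTransition.zero_of_nonpos (by linarith [hs.2] : 2 * s - 1 ≤ 0)]
  have hright : EqOn σ (γ₂ ∘ ψ₂) (Ioo (1 / 2) 1) := fun s hs => by
    simp [σ, ψ₁, smoothTransition.one_of_one_le (by linarith [hs.1] : 1 ≤ 2 * s), h]
  have hint := (continuous_weightedLength_integrand hW hσ).intervalIntegrable (μ := volume)
  refine ⟨σ, hσ, ?_, ?_, ?_⟩
  · norm_num [σ, ψ₁, ψ₂, smoothTransition.zero_of_nonpos]
  · norm_num [σ, ψ₁, ψ₂, smoothTransition.one_of_one_le, h]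
  rw [weightedLength, ← intervalIntegral.integral_add_adjacent_intervals (hint 0 (1 / 2))
    (hint (1 / 2) 1), ← weightedLength, ← weightedLength,
    weightedLength_congr (by norm_num) hleft, weightedLength_congr (by norm_num) hright,
    weightedLength_comp_of_monotone (hγ₁.differentiable one_ne_zero)
      (hψ₁.differentiable one_ne_zero) hψ₁_mono,
    weightedLength_comp_of_monotone (hγ₂.differentiable one_ne_zero)
      (hψ₂.differentiable one_ne_zero) hψ₂_mono]
  norm_num [ψ₁, ψ₂]

lemma weightedLength_smul_le (hW : Continuous W) {M : ℝ} {b : E}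
    (hWb : ∀ s ∈ Icc (0 : ℝ) 1, W (s • b) ≤ M * ‖s • b‖ ^ 2) :
    weightedLength W (fun s => s • b) 0 1 ≤ √(M / 2) * ‖b‖ ^ 2 := by
  have hγ : ContDiff ℝ 1 fun s : ℝ => s • b := contDiff_id.smul contDiff_const
  calc weightedLength W (fun s => s • b) 0 1
      ≤ ∫ s in (0 : ℝ)..1, 2 * √(M / 2) * ‖b‖ ^ 2 * s := by
        refine intervalIntegral.integral_mono_on zero_le_one
          ((continuous_weightedLength_integrand hW hγ).intervalIntegrable 0 1)
          ((continuous_const.mul continuous_id).intervalIntegrable 0 1) fun s hs => ?_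
        have hsb : ‖s • b‖ = s * ‖b‖ := by rw [norm_smul, norm_of_nonneg hs.1]
        have h := mul_le_mul_of_nonneg_left (sqrt_le_sqrt (hWb s hs)) (sqrt_nonneg 2)
        rw [sqrt_two_mul_sqrt_mul_sq (norm_nonneg _), hsb] at h
        rw [((hasDerivAt_id' s).smul_const b).deriv, one_smul]
        nlinarith [norm_nonneg b]
    _ = √(M / 2) * ‖b‖ ^ 2 := by
        rw [intervalIntegral.integral_const_mul, integral_id]
        ring

end WeightedLength

section LowerBound

variable {F : Type*} [NormedAddCommGroup F] [InnerProductSpace ℝ F] {W : F → ℝ} {γ : ℝ → F}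
  {m r : ℝ}

lemma sqrt_half_mul_sub_le_weightedLength (hW : Continuous W) (hγ : ContDiff ℝ 1 γ) {a b : ℝ}
    (hab : a ≤ b) (hlow : ∀ s ∈ Icc a b, m * ‖γ s‖ ^ 2 ≤ W (γ s)) :
    √(m / 2) * (‖γ b‖ ^ 2 - ‖γ a‖ ^ 2) ≤ weightedLength W γ a b := by
  have hd : ∀ s, HasDerivAt γ (deriv γ s) s := fun s =>
    (hγ.differentiable one_ne_zero s).hasDerivAt
  rw [mul_sub]
  refine intervalIntegral.sub_le_integral_of_hasDeriv_right_of_le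
    (g := fun s => √(m / 2) * ‖γ s‖ ^ 2) hab
    (continuous_const.mul (hγ.continuous.norm.pow 2)).continuousOn
    (fun s _ => ((hd s).norm_sq.const_mul _).hasDerivWithinAt)
    (continuous_weightedLength_integrand hW hγ).integrableOn_Icc fun s hs => ?_
  have hlow' := mul_le_mul_of_nonneg_left (sqrt_le_sqrt (hlow s (Ioo_subset_Icc_self hs)))
    (sqrt_nonneg 2)
  rw [sqrt_two_mul_sqrt_mul_sq (norm_nonneg _)] at hlow'
  calc √(m / 2) * (2 * inner ℝ (γ s) (deriv γ s)) ≤ √(m / 2) * (2 * (‖γ s‖ * ‖deriv γ s‖)) := by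
        gcongr
        exact real_inner_le_norm _ _
    _ = 2 * √(m / 2) * ‖γ s‖ * ‖deriv γ s‖ := by ring
    _ ≤ √2 * √(W (γ s)) * ‖deriv γ s‖ := by gcongr

/-- The first time `γ` reaches the sphere of radius `ρ`, it has stayed in the ball where the
quadratic lower bound on `W` holds. -/
lemma sqrt_half_mul_sub_sq_le_weightedLength (hW : Continuous W) (hγ : ContDiff ℝ 1 γ)
    (hlow : ∀ q, ‖q‖ ≤ r → m * ‖q‖ ^ 2 ≤ W q) {a b ρ : ℝ} (hab : a ≤ b) (hρ : ρ ≤ r)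
    (ha : ‖γ a‖ ≤ ρ) (hb : ρ ≤ ‖γ b‖) :
    √(m / 2) * (ρ ^ 2 - ‖γ a‖ ^ 2) ≤ weightedLength W γ a b := by
  obtain ⟨t, ht, hγt, hball⟩ := exists_first_hit hγ.continuous.norm hab ha hb
  calc √(m / 2) * (ρ ^ 2 - ‖γ a‖ ^ 2) ≤ weightedLength W γ a t := by
        rw [← hγt]
        exact sqrt_half_mul_sub_le_weightedLength hW hγ ht.1 fun s hs =>
          hlow _ ((hball s hs).trans hρ)
    _ ≤ weightedLength W γ a b := weightedLength_mono_right hW hγ ht.2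

end LowerBound

/-- With `y τ = ρ - ∫₀^τ g`, the tail `S τ = ∫_τ^R y` satisfies `S' = -y ≤ -β S + (A - ρ)`,
where `A = ∫₀^R e ≥ β S 0`, and `S R = 0`; Grönwall's inequality turns this into the claim. -/
lemma mul_one_sub_exp_le_integral {e g : ℝ → ℝ} {β ρ R : ℝ} (he : Continuous e)
    (hg : Continuous g) (hβ : 0 < β) (hR : 0 ≤ R) (hge : ∀ τ ∈ Icc 0 R, g τ ≤ e τ)
    (hρ : ∀ τ ∈ Icc 0 R, β * (ρ - ∫ s in (0 : ℝ)..τ, g s) ≤ e τ) :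
    ρ * (1 - exp (-(β * R))) ≤ ∫ s in (0 : ℝ)..R, e s := by
  set A := ∫ s in (0 : ℝ)..R, e s with hA
  set y : ℝ → ℝ := fun τ => ρ - ∫ s in (0 : ℝ)..τ, g s
  have hy : Continuous y := continuous_const.sub (intervalIntegral.continuous_primitive
    (fun a b => hg.intervalIntegrable a b) 0)
  set S : ℝ → ℝ := fun τ => ∫ s in τ..R, y s
  have hS : ∀ τ, HasDerivAt S (-y τ) τ := fun τ =>
    intervalIntegral.integral_hasDerivAt_left (hy.intervalIntegrable _ _)
      hy.aestronglyMeasurable.stronglyMeasurableAtFilter hy.continuousAt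
  have hsplit : ∀ τ ∈ Icc 0 R, (∫ s in (0 : ℝ)..τ, g s) + β * S τ ≤ A := fun τ hτ => by
    rw [hA, ← intervalIntegral.integral_add_adjacent_intervals (he.intervalIntegrable 0 τ)
      (he.intervalIntegrable τ R), ← intervalIntegral.integral_const_mul]
    exact add_le_add
      (intervalIntegral.integral_mono_on hτ.1 (hg.intervalIntegrable _ _)
        (he.intervalIntegrable _ _) fun s hs => hge s ⟨hs.1, hs.2.trans hτ.2⟩)
      (intervalIntegral.integral_mono_on hτ.2 ((continuous_const.mul hy).intervalIntegrable _ _)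
        (he.intervalIntegrable _ _) fun s hs => hρ s ⟨hτ.1.trans hs.1, hs.2⟩)
  have hgr := le_gronwallBound_of_liminf_deriv_right_le (f := S) (f' := fun τ => -y τ)
    (K := -β) (ε := A - ρ) (fun τ _ => (hS τ).continuousAt.continuousWithinAt)
    (fun τ _ r hr => (hS τ).hasDerivWithinAt.liminf_right_slope_le hr) le_rfl
    (fun τ hτ => by linarith [hsplit τ (Ico_subset_Icc_self hτ)]) R ⟨hR, le_rfl⟩
  rw [gronwallBound_of_K_ne_0 (neg_ne_zero.mpr hβ.ne')] at hgr
  have h0 : β * S 0 ≤ A := by simpa using hsplit 0 ⟨le_rfl, hR⟩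
  have hE : 0 < exp (-(β * R)) := exp_pos _
  simp only [S, intervalIntegral.integral_same, sub_zero, neg_mul] at hgr
  field_simp at hgr
  nlinarith [mul_le_mul_of_nonneg_right h0 hE.le]

section DegDist

variable {W : ℂ → ℝ}

lemma weightedLength_le_oneDEnergy (hW : ∀ q, 0 ≤ W q) (hWc : Continuous W)
    {u : ℝ → ℂ} (hu : ContDiff ℝ 1 u) {a b : ℝ} (hab : a ≤ b) :
    weightedLength W u a b ≤ oneDEnergy W u a b := by
  have hu_cont := hu.continuous
  have hu'_cont := hu.continuous_deriv le_rfl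
  exact intervalIntegral.integral_mono_on hab
    ((continuous_weightedLength_integrand hWc hu).intervalIntegrable a b)
    ((by fun_prop : Continuous fun t => 1 / 2 * ‖deriv u t‖ ^ 2 + W (u t)).intervalIntegrable a b)
    fun t _ => sqrt_two_mul_sqrt_mul_le (hW _) _

lemma degDist_le_weightedLength {γ : ℝ → ℂ} (hγ : ContDiff ℝ 1 γ) :
    degDist W (γ 0) (γ 1) ≤ weightedLength W γ 0 1 :=
  csInf_le ⟨0, by
    rintro c ⟨γ, -, -, -, rfl⟩
    exact intervalIntegral.integral_nonneg zero_le_one fun t _ => by positivity⟩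
    ⟨γ, hγ, rfl, rfl, rfl⟩

lemma le_degDist {p q : ℂ} {c : ℝ}
    (h : ∀ γ : ℝ → ℂ, ContDiff ℝ 1 γ → γ 0 = p → γ 1 = q → c ≤ weightedLength W γ 0 1) :
    c ≤ degDist W p q := by
  refine le_csInf ⟨_, fun s : ℝ => p + s • (q - p), by fun_prop, by simp, by simp, rfl⟩ ?_
  rintro _ ⟨γ, hγ, rfl, rfl, rfl⟩
  exact h γ hγ rfl rfl

lemma degDist_le_add (hW : Continuous W) {γ₁ γ₂ : ℝ → ℂ} (hγ₁ : ContDiff ℝ 1 γ₁)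
    (hγ₂ : ContDiff ℝ 1 γ₂) (h : γ₁ 1 = γ₂ 0) :
    degDist W (γ₁ 0) (γ₂ 1) ≤ weightedLength W γ₁ 0 1 + weightedLength W γ₂ 0 1 := by
  obtain ⟨σ, hσ, hσ0, hσ1, hσL⟩ := exists_contDiff_weightedLength_eq_add hW hγ₁ hγ₂ h
  rw [← hσ0, ← hσ1, ← hσL]
  exact degDist_le_weightedLength hσ

/-- Triangle inequality through `u t`: go straight from `0` to `u t`, then run `u` backwards. -/
lemma degDist_zero_le_weightedLength_add (hW : Continuous W) {M r : ℝ}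
    (hupp : ∀ q : ℂ, ‖q‖ ≤ r → W q ≤ M * ‖q‖ ^ 2) {u : ℝ → ℂ} (hu : ContDiff ℝ 1 u) {t : ℝ}
    (ht : 0 ≤ t) (hut : ‖u t‖ ≤ r) :
    degDist W 0 (u 0) ≤ weightedLength W u 0 t + √(M / 2) * ‖u t‖ ^ 2 := by
  set φ : ℝ → ℝ := fun s => t - t * s
  have hφ : ContDiff ℝ 1 φ := contDiff_const.sub (contDiff_const.mul contDiff_id)
  have hφ_anti : Antitone φ := fun x y hxy => by simp only [φ]; nlinarith
  have hseg : ContDiff ℝ 1 fun s : ℝ => s • u t := contDiff_id.smul contDiff_const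
  have hrev : weightedLength W (u ∘ φ) 0 1 = weightedLength W u 0 t := by
    rw [weightedLength_comp_of_antitone (hu.differentiable one_ne_zero)
      (hφ.differentiable one_ne_zero) hφ_anti]
    simp [φ]
  have hsegL : weightedLength W (fun s : ℝ => s • u t) 0 1 ≤ √(M / 2) * ‖u t‖ ^ 2 :=
    weightedLength_smul_le hW fun s hs => hupp _ <| by
      rw [norm_smul, norm_of_nonneg hs.1]
      nlinarith [norm_nonneg (u t), hs.2]
  have h := degDist_le_add hW hseg (hu.comp hφ) (by simp [φ])
  simp only [zero_smul, Function.comp_apply, φ, mul_one, sub_self] at h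
  linarith

lemma sqrt_half_mul_sq_le_degDist (hW : Continuous W) {m r : ℝ}
    (hlow : ∀ q : ℂ, ‖q‖ ≤ r → m * ‖q‖ ^ 2 ≤ W q) {q : ℂ} {ρ : ℝ} (hρ₀ : 0 ≤ ρ) (hρ : ρ ≤ r)
    (hq : ρ ≤ ‖q‖) : √(m / 2) * ρ ^ 2 ≤ degDist W 0 q :=
  le_degDist fun γ hγ h0 h1 => by
    simpa [h0] using sqrt_half_mul_sub_sq_le_weightedLength hW hγ hlow zero_le_one hρ
      (by simpa [h0] using hρ₀) (h1 ▸ hq)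

lemma degDist_mul_one_sub_exp_le_oneDEnergy (hW : ∀ q, 0 ≤ W q)
    (hWc : Continuous W) {r m M : ℝ} (hm : 0 < m) (hM : 0 < M)
    (hbound : ∀ q : ℂ, ‖q‖ ≤ r → m * ‖q‖ ^ 2 ≤ W q ∧ W q ≤ M * ‖q‖ ^ 2) {u : ℝ → ℂ}
    (hu : ContDiff ℝ 1 u) {R : ℝ} (hR : 0 ≤ R) (hstay : ∀ τ ∈ Icc 0 R, ‖u τ‖ ≤ r) :
    degDist W 0 (u 0) * (1 - exp (-(m / √(M / 2) * R))) ≤ oneDEnergy W u 0 R := by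
  have hν : 0 < √(M / 2) := sqrt_pos.mpr (half_pos hM)
  have hu_cont := hu.continuous
  have hu'_cont := hu.continuous_deriv le_rfl
  refine mul_one_sub_exp_le_integral (by fun_prop) (continuous_weightedLength_integrand hWc hu)
    (div_pos hm hν) hR (fun τ _ => sqrt_two_mul_sqrt_mul_le (hW _) _) fun τ hτ => ?_
  have htri := degDist_zero_le_weightedLength_add hWc (fun q hq => (hbound q hq).2) hu hτ.1
    (hstay τ hτ)
  calc m / √(M / 2) * (degDist W 0 (u 0) - weightedLength W u 0 τ)
      ≤ m / √(M / 2) * (√(M / 2) * ‖u τ‖ ^ 2) := by gcongr; linarith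
    _ = m * ‖u τ‖ ^ 2 := by field_simp
    _ ≤ 1 / 2 * ‖deriv u τ‖ ^ 2 + W (u τ) := by
        nlinarith [(hbound _ (hstay τ hτ)).1, sq_nonneg ‖deriv u τ‖]

end DegDist

theorem energy_lower_bound_near_well_general (W : ℂ → ℝ) (hWreg : ContDiff ℝ 2 W)
    (hW : ∀ q, 0 ≤ W q) (hW0 : W 0 = 0)
    (hHess : ∀ v : ℂ, v ≠ 0 → 0 < iteratedFDeriv ℝ 2 W 0 ![v, v]) :
    ∃ η > (0:ℝ), ∃ R₀ > (0:ℝ), ∃ C > (0:ℝ), ∃ c > (0:ℝ),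
      ∀ R > R₀, ∀ u : ℝ → ℂ, ContDiff ℝ 1 u →
        ∀ a : ℂ, u 0 = a → degDist W 0 a ≤ η →
          degDist W 0 a - C * Real.exp (-c * R) ≤ oneDEnergy W u 0 R := by
  have hWc := hWreg.continuous
  have hcrit : fderiv ℝ W 0 = 0 :=
    IsLocalMin.fderiv_eq_zero (Eventually.of_forall fun q => hW0 ▸ hW q)
  obtain ⟨r, hr, m, hm, M, hM, hbound⟩ := exists_quadratic_bounds hWreg hW0 hcrit hHess
  have hlow := fun q hq => (hbound q hq).1
  have hk : 0 < √(m / 2) := sqrt_pos.mpr (half_pos hm)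
  refine ⟨√(m / 2) * r ^ 2 / 8, by positivity, 1, one_pos, √(m / 2) * r ^ 2 / 8, by positivity,
    m / √(M / 2), div_pos hm (sqrt_pos.mpr (half_pos hM)), fun R hR u hu a hua ha => ?_⟩
  subst hua
  have hu0 : ‖u 0‖ ≤ r / 2 := by
    by_contra! h
    nlinarith [sqrt_half_mul_sq_le_degDist hWc hlow (half_pos hr).le (half_le_self hr.le) h.le,
      mul_pos hk (pow_pos hr 2)]
  by_cases hstay : ∀ τ ∈ Icc 0 R, ‖u τ‖ ≤ r
  · have h := degDist_mul_one_sub_exp_le_oneDEnergy hW hWc hm hM hbound hu (by linarith) hstay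
    rw [neg_mul]
    nlinarith [mul_le_mul_of_nonneg_right ha (exp_pos (-(m / √(M / 2) * R))).le]
  · -- crossing from radius `r / 2` to `r` already costs `3/4 √(m/2) r² ≥ η`
    push Not at hstay
    obtain ⟨τ, hτ, hexit⟩ := hstay
    have hL := sqrt_half_mul_sub_sq_le_weightedLength hWc hu hlow hτ.1 le_rfl
      (hu0.trans (half_le_self hr.le)) hexit.le
    have hE := (weightedLength_mono_right hWc hu hτ.2).trans
      (weightedLength_le_oneDEnergy hW hWc hu (show (0 : ℝ) ≤ R by linarith))
    have hu0sq := mul_le_mul_of_nonneg_left (pow_le_pow_left₀ (norm_nonneg _) hu0 2) hk.le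
    nlinarith [mul_pos (mul_pos hk (pow_pos hr 2)) (exp_pos (-(m / √(M / 2)) * R))]

/-- Lemma 3.1 ("lem20"): a curve starting at geodesic distance `d(0,a) ≤ η` from a
nondegenerate well `0` pays at least `d(0,a) - C e^{-cR}` on an interval of length `R`. -/
theorem energy_lower_bound_near_well (W : ℂ → ℝ) (hWreg : ContDiff ℝ 2 W)
    (hW : ∀ q, 0 ≤ W q) (hW0 : W 0 = 0)
    (B : Set ℂ) (hB : B ∈ nhds (0:ℂ)) (hBconv : Convex ℝ B)
    (hconv : ConvexOn ℝ B W) (hzero : ∀ q ∈ B, W q = 0 → q = 0)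
    (hHess : ∀ v : ℂ, v ≠ 0 → 0 < iteratedFDeriv ℝ 2 W 0 ![v, v]) :
    ∃ η > (0:ℝ), ∃ R₀ > (0:ℝ), ∃ C > (0:ℝ), ∃ c > (0:ℝ),
      ∀ R > R₀, ∀ u : ℝ → ℂ, ContDiff ℝ 1 u →
        ∀ a : ℂ, u 0 = a → degDist W 0 a ≤ η →
          degDist W 0 a - C * Real.exp (-c * R) ≤ oneDEnergy W u 0 R :=
  energy_lower_bound_near_well_general W hWreg hW hW0 hHess
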